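/- Proposal bound for PDA: If the prefix-truncated instance Î admits a stable matching of the original instance, then the number of proposals made by resident-proposing deferred acceptance on Î is at most min over stable matchings M of Î of Σ_h [ρ_h − rank(L̂(h), M(h)) + 1], where ρ_h is the length of hospital h's truncated list. -/

import Mathlib

/-- An agent with preference list `l`, currently matched according to `o`,
strictly prefers `x` to its current situation. -/
def prefersOver {α : Type*} [DecidableEq α] (l : List α) (x : α) (o : Option α) : Prop :=
  x ∈ l ∧ ∀ y, o = some y → l.idxOf x < l.idxOf y

/-- With respect to list `l`, outcome `o₁` is weakly preferred to outcome `o₂`. -/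
def weaklyPrefers {α : Type*} [DecidableEq α] (l : List α) (o₁ o₂ : Option α) : Prop :=
  ∀ y, o₂ = some y → ∃ x, o₁ = some x ∧ l.idxOf x ≤ l.idxOf y

/-- One step of deferred acceptance with proposers' lists `Lp` and receivers' lists `Lq`.
The state consists of, for each proposer, the index of its next proposal, and, for each
receiver, its tentatively held proposer.  An unmatched proposer with proposals remaining
proposes to the next entry of its list; the receiver keeps the better of its tentative
partner and the new proposer. -/
def daStep (n : ℕ) (Lp Lq : Fin n → List (Fin n))
    (s : (Fin n → ℕ) × (Fin n → Option (Fin n))) :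
    (Fin n → ℕ) × (Fin n → Option (Fin n)) :=
  match (List.finRange n).find?
      (fun p => decide ((∀ q, s.2 q ≠ some p) ∧ s.1 p < (Lp p).length)) with
  | none => s
  | some p =>
    match (Lp p)[s.1 p]? with
    | none => s
    | some q =>
      let next' := Function.update s.1 p (s.1 p + 1)
      match s.2 q with
      | none => (next', Function.update s.2 q (some p))
      | some p' =>
        if (Lq q).idxOf p < (Lq q).idxOf p' then
          (next', Function.update s.2 q (some p))
        else (next', s.2)

/-- Run `k` steps of deferred acceptance from the initial state. -/
def daRun (n : ℕ) (Lp Lq : Fin n → List (Fin n)) :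
    ℕ → (Fin n → ℕ) × (Fin n → Option (Fin n))
  | 0 => (fun _ => 0, fun _ => none)
  | k + 1 => daStep n Lp Lq (daRun n Lp Lq k)

/-- The partner of proposer `p` induced by the receivers' held proposers. -/
def partnerOf (n : ℕ) (held : Fin n → Option (Fin n)) (p : Fin n) : Option (Fin n) :=
  (List.finRange n).find? (fun q => held q == some p)

/-- `(r, h)` is a blocking pair with respect to the partner functions `mr`, `mh`. -/
def Blocking {n : ℕ} (Lr Lh : Fin n → List (Fin n))
    (mr mh : Fin n → Option (Fin n)) (r h : Fin n) : Prop :=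
  prefersOver (Lr r) h (mr r) ∧ prefersOver (Lh h) r (mh h)

/-- The rank (1-based) of an optional partner on a list; `0` if unmatched. -/
def orank {α : Type*} [DecidableEq α] (l : List α) : Option α → ℤ
  | none => 0
  | some a => l.idxOf a + 1

/-! Along the run of deferred acceptance, no proposer is ever rejected by its partner in a
stable matching `μ`: the rejection would exhibit a blocking pair of `μ`. Hence a resident
`r` who has proposed to `h ≠ μ(r)` prefers `h` to `μ(r)`, and stability of `μ` forces `h`
to rank `r` no better than `μ(h)`. The proposers of `h` therefore lie on `L̂(h)` between `μ(h)` and position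
`ρ_h`, and counting the proposals hospital by hospital gives the bound. -/

open Finset

section ListIndex

variable {α : Type*} [DecidableEq α]

lemma prefersOver_of_not_idxOf_lt {l : List α} {x : α} {o : Option α} (hx : x ∈ l)
    (hne : o ≠ some x) (hnlt : ∀ y, o = some y → ¬ l.idxOf y < l.idxOf x) :
    prefersOver l x o := by
  refine ⟨hx, fun y hy => ?_⟩
  have hyx : l.idxOf x ≠ l.idxOf y := fun h =>
    hne (hy ▸ congrArg some ((List.idxOf_inj hx).1 h).symm)
  have := hnlt y hy
  omega

lemma card_filter_idxOf_lt [Fintype α] {l : List α} (hl : l.Nodup) {k : ℕ}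
    (hk : k ≤ l.length) : #{x | l.idxOf x < k} = k := by
  calc #{x | l.idxOf x < k} = #(range k) := by
        refine card_nbij l.idxOf (fun x hx => ?_) (fun x hx y _ h => ?_) (fun i hi => ?_)
        · simpa using hx
        · have hx : l.idxOf x < l.length := (mem_filter.1 hx).2.trans_le hk
          exact (List.idxOf_inj (List.idxOf_lt_length_iff.1 hx)).1 h
        · have hi : i < k := by simpa using hi
          exact ⟨l[i], by simp [hl.idxOf_getElem, hi], hl.idxOf_getElem i (hi.trans_le hk)⟩
    _ = k := card_range k

lemma card_le_length_sub_of_forall_le_idxOf {l : List α} {s : Finset α} {i : ℕ}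
    (hs : ∀ x ∈ s, x ∈ l ∧ i ≤ l.idxOf x) : #s ≤ l.length - i :=
  calc #s ≤ #(Ico i l.length) :=
        card_le_card_of_injOn l.idxOf
          (fun x hx => mem_Ico.2 ⟨(hs x hx).2, List.idxOf_lt_length_iff.2 (hs x hx).1⟩)
          (fun x hx _ _ h => (List.idxOf_inj (hs x hx).1).1 h)
    _ = l.length - i := Nat.card_Ico _ _

end ListIndex

/-- `s.1 p` is the number of proposals made by `p` and `s.2 q` the proposer held by `q`;
`held_of_partner` says that no proposer has been rejected by its `μ`-partner. -/
structure DAInvariant {n : ℕ} (Lp : Fin n → List (Fin n)) (μr : Fin n → Option (Fin n))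
    (s : (Fin n → ℕ) × (Fin n → Option (Fin n))) : Prop where
  next_le_length : ∀ r, s.1 r ≤ (Lp r).length
  next_eq_of_held : ∀ q p, s.2 q = some p → s.1 p = (Lp p).idxOf q + 1
  held_of_partner : ∀ r q, μr r = some q → (Lp r).idxOf q < s.1 r → s.2 q = some r

namespace DAInvariant

variable {n : ℕ} {Lp Lq : Fin n → List (Fin n)} {μr μh : Fin n → Option (Fin n)}
  {s : (Fin n → ℕ) × (Fin n → Option (Fin n))} {p q r : Fin n}

lemma mem_of_idxOf_lt_next (hI : DAInvariant Lp μr s) (hprop : (Lp r).idxOf q < s.1 r) :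
    q ∈ Lp r :=
  List.idxOf_lt_length_iff.1 (hprop.trans_le (hI.next_le_length r))

lemma prefersOver_of_proposed (hI : DAInvariant Lp μr s) (hprop : (Lp r).idxOf q < s.1 r)
    (hne : μr r ≠ some q) : prefersOver (Lp r) q (μr r) :=
  prefersOver_of_not_idxOf_lt (hI.mem_of_idxOf_lt_next hprop) hne fun y hy hlt => by
    have := hI.next_eq_of_held y r (hI.held_of_partner r y hy (hlt.trans hprop))
    omega

section Free

variable (hI : DAInvariant Lp μr s) (hfree : ∀ q, s.2 q ≠ some p) (hqmem : q ∈ Lp p)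
  (hidx : (Lp p).idxOf q = s.1 p)
include hI hfree hqmem hidx

lemma eq_of_partner_of_free {q₀ : Fin n} (hμ : μr p = some q₀)
    (hle : (Lp p).idxOf q₀ ≤ s.1 p) : q₀ = q := by
  rcases hle.lt_or_eq with hlt | heq
  · exact absurd (hI.held_of_partner p q₀ hμ hlt) (hfree q₀)
  · exact ((List.idxOf_inj hqmem).1 (hidx.trans heq.symm)).symm

lemma prefersOver_of_free (hne : μr p ≠ some q) : prefersOver (Lp p) q (μr p) :=
  prefersOver_of_not_idxOf_lt hqmem hne fun y hy hlt =>
    hfree y (hI.held_of_partner p y hy (hidx ▸ hlt))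

lemma update_next_le_length :
    ∀ r, Function.update s.1 p (s.1 p + 1) r ≤ (Lp r).length := by
  intro r
  rcases eq_or_ne r p with rfl | hrp
  · simpa [← hidx] using List.idxOf_lt_length_iff.2 hqmem
  · simpa [Function.update_of_ne hrp] using hI.next_le_length r

end Free

section Stable

variable (hbij : ∀ r q, μr r = some q ↔ μh q = some r)
  (hstab : ∀ r q, ¬ Blocking Lp Lq μr μh r q)
  (hacc : ∀ r q, q ∈ Lp r → r ∈ Lq q)
include hbij hstab hacc

lemma accept (hI : DAInvariant Lp μr s) (hfree : ∀ q, s.2 q ≠ some p) (hqmem : q ∈ Lp p)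
    (hidx : (Lp p).idxOf q = s.1 p)
    (hbetter : ∀ p', s.2 q = some p' → (Lq q).idxOf p < (Lq q).idxOf p') :
    DAInvariant Lp μr (Function.update s.1 p (s.1 p + 1), Function.update s.2 q (some p)) where
  next_le_length := hI.update_next_le_length hfree hqmem hidx
  next_eq_of_held q₀ p₀ h₀ := by
    dsimp only at h₀ ⊢
    rcases eq_or_ne q₀ q with rfl | hne
    · obtain rfl : p = p₀ := by simpa using h₀
      simp [hidx]
    · rw [Function.update_of_ne hne] at h₀
      have hp₀ : p₀ ≠ p := by rintro rfl; exact hfree q₀ h₀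
      simpa [Function.update_of_ne hp₀] using hI.next_eq_of_held q₀ p₀ h₀
  held_of_partner r q₀ hμ hlt := by
    dsimp only at hlt ⊢
    rcases eq_or_ne r p with rfl | hrp
    · rw [Function.update_self] at hlt
      obtain rfl := hI.eq_of_partner_of_free hfree hqmem hidx hμ (Nat.lt_succ_iff.1 hlt)
      exact Function.update_self ..
    · rw [Function.update_of_ne hrp] at hlt
      have hheld := hI.held_of_partner r q₀ hμ hlt
      rcases eq_or_ne q₀ q with rfl | hne
      · -- `q₀` leaves its `μ`-partner `r` for `p`, so `(p, q₀)` blocks `μ`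
        have hμq := (hbij r q₀).1 hμ
        refine absurd ⟨hI.prefersOver_of_free hfree hqmem hidx fun h => hrp ?_,
          hacc p q₀ hqmem, fun y hy => ?_⟩ (hstab p q₀)
        · simpa [hμq] using (hbij p q₀).1 h
        · obtain rfl : r = y := by simpa [hμq] using hy
          exact hbetter r hheld
      · rwa [Function.update_of_ne hne]

lemma reject (hI : DAInvariant Lp μr s) (hfree : ∀ q, s.2 q ≠ some p) (hqmem : q ∈ Lp p)
    (hidx : (Lp p).idxOf q = s.1 p) {p' : Fin n} (hheld : s.2 q = some p')
    (hworse : ¬ (Lq q).idxOf p < (Lq q).idxOf p') :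
    DAInvariant Lp μr (Function.update s.1 p (s.1 p + 1), s.2) where
  next_le_length := hI.update_next_le_length hfree hqmem hidx
  next_eq_of_held q₀ p₀ h₀ := by
    have hp₀ : p₀ ≠ p := by rintro rfl; exact hfree q₀ h₀
    simpa [Function.update_of_ne hp₀] using hI.next_eq_of_held q₀ p₀ h₀
  held_of_partner r q₀ hμ hlt := by
    dsimp only at hlt ⊢
    rcases eq_or_ne r p with rfl | hrp
    · rw [Function.update_self] at hlt
      obtain rfl := hI.eq_of_partner_of_free hfree hqmem hidx hμ (Nat.lt_succ_iff.1 hlt)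
      -- `q₀` keeps `p'` rather than its `μ`-partner `r`, so `(p', q₀)` blocks `μ`
      have hμq := (hbij r q₀).1 hμ
      have hp'r : p' ≠ r := by rintro rfl; exact hfree _ hheld
      have hprop : (Lp p').idxOf q₀ < s.1 p' := by rw [hI.next_eq_of_held _ _ hheld]; omega
      have hp'mem := hacc p' q₀ (hI.mem_of_idxOf_lt_next hprop)
      refine absurd ⟨hI.prefersOver_of_proposed hprop fun h => hp'r ?_, hp'mem, fun y hy => ?_⟩
        (hstab p' q₀)
      · exact (by simpa [hμq] using (hbij p' q₀).1 h : r = p').symm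
      · obtain rfl : r = y := by simpa [hμq] using hy
        have := mt (List.idxOf_inj hp'mem).1 hp'r
        omega
    · rw [Function.update_of_ne hrp] at hlt
      exact hI.held_of_partner r q₀ hμ hlt

lemma step (hNp : ∀ r, (Lp r).Nodup) (hI : DAInvariant Lp μr s) :
    DAInvariant Lp μr (daStep n Lp Lq s) := by
  unfold daStep
  split
  · exact hI
  rename_i p hfind
  have hfree : ∀ q, s.2 q ≠ some p := by
    have hp := List.find?_some hfind
    rw [decide_eq_true_eq] at hp
    exact hp.1
  split
  · exact hI
  rename_i q hq
  obtain ⟨hlt, hget⟩ := List.getElem?_eq_some_iff.1 hq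
  have hqmem : q ∈ Lp p := hget ▸ List.getElem_mem hlt
  have hidx : (Lp p).idxOf q = s.1 p := hget ▸ (hNp p).idxOf_getElem _ hlt
  split
  · exact hI.accept hbij hstab hacc hfree hqmem hidx (by simp_all)
  · rename_i p' hheld
    split
    · exact hI.accept hbij hstab hacc hfree hqmem hidx (by simp_all)
    · rename_i hworse
      exact hI.reject hbij hstab hacc hfree hqmem hidx hheld hworse

lemma run (hNp : ∀ r, (Lp r).Nodup) : ∀ k, DAInvariant Lp μr (daRun n Lp Lq k)
  | 0 => ⟨fun _ => Nat.zero_le _, fun _ _ h => by simp [daRun] at h,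
      fun _ _ _ h => by simp [daRun] at h⟩
  | k + 1 => (run hNp k).step hbij hstab hacc hNp

lemma idxOf_partner_le_of_proposed (hI : DAInvariant Lp μr s)
    (hprop : (Lp r).idxOf q < s.1 r) {m : Fin n} (hm : μh q = some m) :
    (Lq q).idxOf m ≤ (Lq q).idxOf r := by
  by_contra! hlt
  have hrm : r ≠ m := by rintro rfl; exact lt_irrefl _ hlt
  have hne : μr r ≠ some q := fun h => hrm (by simpa [hm] using (hbij r q).1 h : m = r).symm
  refine hstab r q ⟨hI.prefersOver_of_proposed hprop hne,
    hacc r q (hI.mem_of_idxOf_lt_next hprop), fun y hy => ?_⟩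
  obtain rfl : m = y := by simpa [hm] using hy
  exact hlt

lemma card_proposers_le (hI : DAInvariant Lp μr s) (q : Fin n) :
    (#{r | (Lp r).idxOf q < s.1 r} : ℤ) ≤ (Lq q).length - orank (Lq q) (μh q) + 1 := by
  have hmem : ∀ r ∈ ({r | (Lp r).idxOf q < s.1 r} : Finset (Fin n)), r ∈ Lq q :=
    fun r hr => hacc r q (hI.mem_of_idxOf_lt_next (mem_filter.1 hr).2)
  cases hμ : μh q with
  | none =>
    have := card_le_length_sub_of_forall_le_idxOf (i := 0) fun r hr =>
      ⟨hmem r hr, Nat.zero_le _⟩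
    simp only [orank]
    omega
  | some m =>
    have := card_le_length_sub_of_forall_le_idxOf fun r hr =>
      ⟨hmem r hr, hI.idxOf_partner_le_of_proposed hbij hstab hacc (mem_filter.1 hr).2 hμ⟩
    have := List.idxOf_le_length (l := Lq q) (a := m)
    simp only [orank]
    omega

lemma sum_next_le (hNp : ∀ r, (Lp r).Nodup) (hI : DAInvariant Lp μr s) :
    ((∑ r, s.1 r : ℕ) : ℤ) ≤ ∑ q, (((Lq q).length : ℤ) - orank (Lq q) (μh q) + 1) := by
  have hcount : ∑ r, s.1 r = ∑ q, #{r | (Lp r).idxOf q < s.1 r} :=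
    calc ∑ r, s.1 r = ∑ r, #{q | (Lp r).idxOf q < s.1 r} :=
          sum_congr rfl fun r _ => (card_filter_idxOf_lt (hNp r) (hI.next_le_length r)).symm
      _ = _ := sum_card_bipartiteAbove_eq_sum_card_bipartiteBelow _
  rw [hcount]
  push_cast
  exact sum_le_sum fun q _ => hI.card_proposers_le hbij hstab hacc q

end Stable

end DAInvariant

theorem PDA_proposal_bound_general
    (n : ℕ) (Lr Lh : Fin n → List (Fin n))
    (hNr : ∀ r, (Lr r).Nodup)
    (ρ : Fin n → ℕ)
    (Lh' Lr' : Fin n → List (Fin n))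
    (hLh' : ∀ h, Lh' h = (Lh h).take (ρ h))
    (hLr' : ∀ r, Lr' r = (Lr r).filter (fun h => decide (r ∈ Lh' h))) :
    ∀ μr μh : Fin n → Option (Fin n),
      (∀ r h, μr r = some h ↔ μh h = some r) →
      (∀ h r, μh h = some r → r ∈ Lh' h) →
      (∀ r h, μr r = some h → h ∈ Lr' r) →
      (∀ r h, ¬ Blocking Lr' Lh' μr μh r h) →
      ((∑ r : Fin n, (daRun n Lr' Lh' ((∑ r : Fin n, (Lr' r).length) + 1)).1 r : ℕ) : ℤ) ≤
        ∑ h : Fin n, ((ρ h : ℤ) - orank (Lh' h) (μh h) + 1) := by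
  intro μr μh hbij _ _ hstab
  have hNr' : ∀ r, (Lr' r).Nodup := fun r => hLr' r ▸ (hNr r).filter _
  have hacc : ∀ r h, h ∈ Lr' r → r ∈ Lh' h := fun r h hh => by
    rw [hLr' r, List.mem_filter] at hh
    exact of_decide_eq_true hh.2
  have hlen : ∀ h, (Lh' h).length ≤ ρ h := fun h => hLh' h ▸ List.length_take_le _ _
  calc _ ≤ ∑ h, (((Lh' h).length : ℤ) - orank (Lh' h) (μh h) + 1) :=
        (DAInvariant.run hbij hstab hacc hNr' _).sum_next_le hbij hstab hacc hNr'
    _ ≤ _ := sum_le_sum fun h _ => by have := hlen h; omega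

/-- **Proposal bound for PDA.** If the prefix-truncated instance admits a
stable matching of the original complete-list instance, then the number of proposals made
by resident-proposing deferred acceptance on the truncated instance is at most
`Σ_h (ρ_h − rank(L̂(h), M(h)) + 1)` for every stable matching `M` of the truncated
instance (hence at most the minimum over all of them). -/
theorem PDA_proposal_bound
    (n : ℕ) (Lr Lh : Fin n → List (Fin n))
    (hNr : ∀ r, (Lr r).Nodup) (hNh : ∀ h, (Lh h).Nodup)
    (hCr : ∀ r h, h ∈ Lr r) (hCh : ∀ h r, r ∈ Lh h)
    (ρ : Fin n → ℕ) (hρ : ∀ h, ρ h ≤ (Lh h).length)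
    (Lh' Lr' : Fin n → List (Fin n))
    (hLh' : ∀ h, Lh' h = (Lh h).take (ρ h))
    (hLr' : ∀ r, Lr' r = (Lr r).filter (fun h => decide (r ∈ Lh' h)))
    (hprom : ∃ μr μh : Fin n → Option (Fin n),
      (∀ r h, μr r = some h ↔ μh h = some r) ∧
      (∀ r h, ¬ Blocking Lr Lh μr μh r h) ∧
      (∀ h r, μh h = some r → r ∈ Lh' h)) :
    ∀ μr μh : Fin n → Option (Fin n),
      (∀ r h, μr r = some h ↔ μh h = some r) →
      (∀ h r, μh h = some r → r ∈ Lh' h) →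
      (∀ r h, μr r = some h → h ∈ Lr' r) →
      (∀ r h, ¬ Blocking Lr' Lh' μr μh r h) →
      ((∑ r : Fin n, (daRun n Lr' Lh' ((∑ r : Fin n, (Lr' r).length) + 1)).1 r : ℕ) : ℤ) ≤
        ∑ h : Fin n, ((ρ h : ℤ) - orank (Lh' h) (μh h) + 1) :=
  PDA_proposal_bound_general n Lr Lh hNr ρ Lh' Lr' hLh' hLr'
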